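/- Let L be a finite-dimensional complex filiform Lie algebra of dimension n ≥ 3 with a basis e₁, …, e_n satisfying [e₁, e_i] = e_{i+1} for all 2 ≤ i ≤ n − 1. Define the linear operator Δ on L by Δ(x) = x + x₃ e_n, where x = Σ_{k=1}^n x_k e_k. Then Δ is a local automorphism of L which is not an automorphism of L. -/

import Mathlib

/-!
Indices are 0-based: `b ⟨k, _⟩` is the paper's `e_{k+1}`, and `x_k` is `b.repr x ⟨k - 1, _⟩`.

Counting dimensions, `L^k` is spanned by `e_{k+2}, …, e_n`. Hence `e_n` is central,
`[e_{n-1}, x]` depends only on `x₁, x₂` (Jacobi), and the `e₃`-coordinate of `[x, y]` is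
`x₁ y₂ - x₂ y₁`. So `D₁ = e₂* ⊗ e_{n-1} + e₃* ⊗ e_n` and `D₂ = e₂* ⊗ e_n` are derivations with
abelian image, which makes `1 + D₁` and `1 + c D₂` automorphisms. If `x₂ = 0` then
`Δ x = (1 + D₁) x`, otherwise `Δ x = (1 + (x₃ / x₂) D₂) x`. But `Δ` is not an automorphism:
`Δ [e₁, e₂] = e₃ + e_n` while `[Δ e₁, Δ e₂] = e₃`.
-/

theorem LieModule.lie_mem_lowerCentralSeries_succ {R L M : Type*} [CommRing R] [LieRing L]
    [LieAlgebra R L] [AddCommGroup M] [Module R M] [LieRingModule L M] (x : L) {m : M} {k : ℕ}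
    (hm : m ∈ lowerCentralSeries R L M k) : ⁅x, m⁆ ∈ lowerCentralSeries R L M (k + 1) := by
  rw [lowerCentralSeries_succ]
  exact LieSubmodule.lie_mem_lie (LieSubmodule.mem_top x) hm

theorem map_lie_one_add_of_leibniz {R L : Type*} [CommRing R] [LieRing L] [LieAlgebra R L]
    {D : Module.End R L} (hD : ∀ x y : L, D ⁅x, y⁆ = ⁅D x, y⁆ + ⁅x, D y⁆)
    (hD₂ : ∀ x y : L, ⁅D x, D y⁆ = 0) (x y : L) :
    (1 + D) ⁅x, y⁆ = ⁅(1 + D) x, (1 + D) y⁆ := by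
  simp only [LinearMap.add_apply, Module.End.one_apply, lie_add, add_lie, hD, hD₂]
  abel

theorem Module.Basis.one_add_repr_self_ne_zero {ι R M : Type*} [Semiring R] [CharZero R]
    [AddCommMonoid M] [Module R M] (b : Module.Basis ι R M) (i j : ι) :
    1 + b.repr (b i) j ≠ 0 := by
  classical
  rw [Module.Basis.repr_self, Finsupp.single_apply]
  split_ifs <;> norm_num

namespace LieAlgebra

open LieModule

variable {K L : Type*} [Field K] [LieRing L] [LieAlgebra K L] {n : ℕ}

variable (K L) in
def IsFiliform (n : ℕ) : Prop :=
  ∀ k : ℕ, 1 ≤ k → k ≤ n - 1 → Module.finrank K (lowerCentralSeries K L L k) = n - k - 1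

def IsAdaptedBasis (b : Module.Basis (Fin n) K L) : Prop :=
  ∀ (i : Fin n) (_ : 1 ≤ i.val) (_ : i.val ≤ n - 2),
    ⁅b ⟨0, by omega⟩, b i⁆ = b ⟨i.val + 1, by omega⟩

namespace IsAdaptedBasis

variable {b : Module.Basis (Fin n) K L}

theorem lie_basis_zero (hb : IsAdaptedBasis b) {i j : Fin n} (hi : 1 ≤ i.val)
    (hj : j.val = i.val + 1) : ⁅b ⟨0, by omega⟩, b i⁆ = b j := by
  rw [hb i hi (by omega)]
  exact congrArg b (Fin.ext hj.symm)

theorem basis_mem_lowerCentralSeries (hb : IsAdaptedBasis b) {k : ℕ} {i : Fin n}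
    (hki : k < i.val) : b i ∈ lowerCentralSeries K L L k := by
  induction k generalizing i with
  | zero => exact LieSubmodule.mem_top _
  | succ k ih =>
    rw [← hb.lie_basis_zero (i := ⟨i.val - 1, by omega⟩) (by simp; omega) (by simp; omega)]
    exact lie_mem_lowerCentralSeries_succ _ (ih (by simp; omega))

theorem lie_basis_mem_lowerCentralSeries (hb : IsAdaptedBasis b) (x : L) {k : ℕ} {i : Fin n}
    (hki : k ≤ i.val) : ⁅x, b i⁆ ∈ lowerCentralSeries K L L k := by
  cases k with
  | zero => exact LieSubmodule.mem_top _
  | succ k => exact lie_mem_lowerCentralSeries_succ x (hb.basis_mem_lowerCentralSeries hki)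

theorem lie_basis_basis_mem_lowerCentralSeries_two (hb : IsAdaptedBasis b) {i j : Fin n}
    (hi : 1 ≤ i.val) (hj : 1 ≤ j.val) : ⁅b i, b j⁆ ∈ lowerCentralSeries K L L 2 := by
  rcases le_or_gt 2 j.val with hj2 | hj2
  · exact hb.lie_basis_mem_lowerCentralSeries _ hj2
  rcases le_or_gt 2 i.val with hi2 | hi2
  · rw [← lie_skew]
    exact neg_mem (hb.lie_basis_mem_lowerCentralSeries _ hi2)
  rw [show i = j from Fin.ext (by omega), lie_self]
  exact zero_mem _

theorem lowerCentralSeries_eq_span (hb : IsAdaptedBasis b) (i : Fin n)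
    (hi : Module.finrank K (lowerCentralSeries K L L i) = n - i - 1) :
    (lowerCentralSeries K L L i : Submodule K L) = Submodule.span K (b '' Set.Ioi i) := by
  have := Module.Finite.of_basis b
  symm
  refine Submodule.eq_of_le_of_finrank_le ?_ ?_
  · rw [Submodule.span_le]
    rintro _ ⟨j, hj, rfl⟩
    exact hb.basis_mem_lowerCentralSeries hj
  · have hcard := finrank_span_eq_card
      (b.linearIndependent.comp ((↑) : Set.Ioi i → Fin n) Subtype.val_injective)
    rw [Fintype.card_Ioi, Fin.card_Ioi, Set.range_comp, Subtype.range_coe] at hcard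
    rw [hcard]
    exact hi.trans_le (by omega)

theorem repr_eq_zero_of_mem_lowerCentralSeries (hb : IsAdaptedBasis b) (hL : IsFiliform K L n)
    {k : ℕ} (hk : 1 ≤ k) (hkn : k ≤ n - 1) {x : L} (hx : x ∈ lowerCentralSeries K L L k)
    {i : Fin n} (hi : i.val ≤ k) : b.repr x i = 0 := by
  have hspan := hb.lowerCentralSeries_eq_span ⟨k, by omega⟩ (hL k hk hkn)
  have hx' : x ∈ Submodule.span K (b '' Set.Ioi ⟨k, by omega⟩) := hspan ▸ hx
  by_contra h
  exact (not_lt.mpr hi) ((b.mem_span_image.mp hx') (Finsupp.mem_support_iff.mpr h))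

variable (hb : IsAdaptedBasis b) (hL : IsFiliform K L n)
include hb hL

theorem eq_zero_of_mem_lowerCentralSeries (hn : 2 ≤ n) {x : L}
    (hx : x ∈ lowerCentralSeries K L L (n - 1)) : x = 0 :=
  b.ext_elem fun i => by
    simpa using hb.repr_eq_zero_of_mem_lowerCentralSeries hL (by omega) le_rfl hx (by omega)

theorem lie_basis_last (hn : 2 ≤ n) (x : L) : ⁅x, b ⟨n - 1, by omega⟩⁆ = 0 :=
  hb.eq_zero_of_mem_lowerCentralSeries hL hn (hb.lie_basis_mem_lowerCentralSeries x le_rfl)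

theorem basis_last_lie (hn : 2 ≤ n) (x : L) : ⁅b ⟨n - 1, by omega⟩, x⁆ = 0 := by
  rw [← lie_skew, hb.lie_basis_last hL hn, neg_zero]

theorem lie_basis_penultimate_eq_zero (hn : 2 < n) {j : Fin n} (hj : 2 ≤ j.val) :
    ⁅b j, b ⟨n - 2, by omega⟩⁆ = 0 := by
  have hw : ⁅b ⟨j.val - 1, by omega⟩, b ⟨n - 2, by omega⟩⁆ ∈ lowerCentralSeries K L L (n - 2) :=
    hb.lie_basis_mem_lowerCentralSeries _ le_rfl
  have hz : ⁅b ⟨0, by omega⟩, ⁅b ⟨j.val - 1, by omega⟩, b ⟨n - 2, by omega⟩⁆⁆ = 0 := by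
    refine hb.eq_zero_of_mem_lowerCentralSeries hL (by omega) ?_
    rw [show n - 1 = n - 2 + 1 by omega]
    exact lie_mem_lowerCentralSeries_succ _ hw
  rw [← hb.lie_basis_zero (i := ⟨j.val - 1, by omega⟩) (by simp; omega) (by simp; omega), lie_lie,
    hz, hb.lie_basis_zero (j := ⟨n - 1, by omega⟩) (by simp; omega) (by simp; omega),
    hb.lie_basis_last hL (by omega), sub_zero]

theorem basis_penultimate_lie (hn : 2 < n) (x : L) :
    ⁅b ⟨n - 2, by omega⟩, x⁆ = b.repr x ⟨0, by omega⟩ • ⁅b ⟨n - 2, by omega⟩, b ⟨0, by omega⟩⁆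
      + b.repr x ⟨1, by omega⟩ • ⁅b ⟨n - 2, by omega⟩, b ⟨1, by omega⟩⁆ := by
  conv_lhs => rw [← b.sum_repr x]
  rw [lie_sum, Fintype.sum_eq_add ⟨0, by omega⟩ ⟨1, by omega⟩ (by simp [Fin.ext_iff]), lie_smul,
    lie_smul]
  rintro j ⟨hj0, hj1⟩
  have hj : 2 ≤ j.val := by simp only [ne_eq, Fin.ext_iff] at hj0 hj1; omega
  rw [lie_smul, ← lie_skew, hb.lie_basis_penultimate_eq_zero hL hn hj, neg_zero, smul_zero]

theorem repr_lie_one (hn : 2 < n) (x y : L) : b.repr ⁅x, y⁆ ⟨1, by omega⟩ = 0 :=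
  hb.repr_eq_zero_of_mem_lowerCentralSeries hL le_rfl (by omega)
    (lie_mem_lowerCentralSeries_succ x (LieSubmodule.mem_top y)) le_rfl

theorem repr_lie_basis_zero_two (hn : 2 < n) (j : Fin n) :
    b.repr ⁅b ⟨0, by omega⟩, b j⁆ ⟨2, hn⟩ = b.repr (b j) ⟨1, by omega⟩ := by
  rcases Nat.eq_zero_or_pos j.val with hj0 | hj0
  · rw [show j = ⟨0, by omega⟩ from Fin.ext hj0, lie_self]
    simp
  rcases lt_or_ge j.val (n - 1) with hjn | hjn
  · rw [hb.lie_basis_zero (j := ⟨j.val + 1, by omega⟩) hj0 rfl]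
    simp [Finsupp.single_apply, Fin.ext_iff]
  · rw [show j = ⟨n - 1, by omega⟩ from Fin.ext (by simp; omega), hb.lie_basis_last hL (by omega)]
    simp [Finsupp.single_apply, Fin.ext_iff]
    omega

theorem repr_lie_two (hn : 2 < n) (x y : L) :
    b.repr ⁅x, y⁆ ⟨2, hn⟩ = b.repr x ⟨0, by omega⟩ * b.repr y ⟨1, by omega⟩
      - b.repr x ⟨1, by omega⟩ * b.repr y ⟨0, by omega⟩ := by
  suffices h : (LieModule.toEnd K L L : L →ₗ[K] Module.End K L).compr₂ (b.coord ⟨2, hn⟩) =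
      (b.coord ⟨0, by omega⟩).smulRight (b.coord ⟨1, by omega⟩)
        - (b.coord ⟨1, by omega⟩).smulRight (b.coord ⟨0, by omega⟩) by
    simpa using congr($h x y)
  refine LinearMap.ext_basis b b fun i j => ?_
  simp only [LinearMap.compr₂_apply, LinearMap.sub_apply, LinearMap.smulRight_apply,
    LieHom.coe_toLinearMap, LieModule.toEnd_apply_apply, LinearMap.smul_apply,
    Module.Basis.coord_apply, smul_eq_mul, Module.Basis.repr_self]
  rcases Nat.eq_zero_or_pos i.val with hi | hi
  · rw [show i = ⟨0, by omega⟩ from Fin.ext hi, hb.repr_lie_basis_zero_two hL hn]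
    simp [Finsupp.single_apply]
  rcases Nat.eq_zero_or_pos j.val with hj | hj
  · rw [show j = ⟨0, by omega⟩ from Fin.ext hj, ← lie_skew, map_neg, Finsupp.neg_apply,
      hb.repr_lie_basis_zero_two hL hn]
    simp [Finsupp.single_apply, Fin.ext_iff]
  rw [hb.repr_eq_zero_of_mem_lowerCentralSeries hL (by omega) (by omega)
    (hb.lie_basis_basis_mem_lowerCentralSeries_two hi hj) le_rfl]
  simp [Finsupp.single_apply, Fin.ext_iff, hi.ne', hj.ne']

end IsAdaptedBasis

noncomputable def shiftDerivation (b : Module.Basis (Fin n) K L) (hn : 2 < n) : Module.End K L :=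
  (b.coord ⟨1, by omega⟩).smulRight (b ⟨n - 2, by omega⟩)
    + (b.coord ⟨2, hn⟩).smulRight (b ⟨n - 1, by omega⟩)

noncomputable def centralDerivation (b : Module.Basis (Fin n) K L) (hn : 2 < n) (c : K) :
    Module.End K L :=
  c • (b.coord ⟨1, by omega⟩).smulRight (b ⟨n - 1, by omega⟩)

section Derivations

variable (b : Module.Basis (Fin n) K L) (hn : 2 < n)

theorem shiftDerivation_apply (x : L) :
    shiftDerivation b hn x
      = b.repr x ⟨1, by omega⟩ • b ⟨n - 2, by omega⟩ + b.repr x ⟨2, hn⟩ • b ⟨n - 1, by omega⟩ :=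
  rfl

theorem centralDerivation_apply (c : K) (x : L) :
    centralDerivation b hn c x = (c * b.repr x ⟨1, by omega⟩) • b ⟨n - 1, by omega⟩ :=
  mul_smul _ _ _ |>.symm

theorem bijective_one_add_centralDerivation (c : K) :
    Function.Bijective ⇑(1 + centralDerivation b hn c : Module.End K L) := by
  refine (Module.End.isUnit_iff _).mp (IsNilpotent.isUnit_one_add ⟨2, ?_⟩)
  ext x
  simp [pow_two, centralDerivation_apply, Finsupp.single_apply, Fin.ext_iff]
  omega

theorem bijective_one_add_shiftDerivation [CharZero K] :
    Function.Bijective ⇑(1 + shiftDerivation b hn : Module.End K L) := by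
  -- `CharZero` is needed: for `n = 3`, `1 + shiftDerivation` doubles `e₂` and `e₃`
  have := Module.Finite.of_basis b
  have hinj : Function.Injective ⇑(1 + shiftDerivation b hn : Module.End K L) := by
    rw [injective_iff_map_eq_zero]
    intro x hx
    have hv1 : b.repr (b ⟨n - 1, by omega⟩) ⟨1, by omega⟩ = 0 := by
      simp [Finsupp.single_apply, Fin.ext_iff]
      omega
    have hx1 := congr(b.repr $hx ⟨1, by omega⟩)
    have hx2 := congr(b.repr $hx ⟨2, hn⟩)
    simp only [LinearMap.add_apply, Module.End.one_apply, shiftDerivation_apply, map_add,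
      map_smul, Finsupp.add_apply, Finsupp.smul_apply, smul_eq_mul, map_zero,
      Finsupp.coe_zero, Pi.zero_apply, hv1, mul_zero, add_zero] at hx1 hx2
    have h1 : b.repr x ⟨1, by omega⟩ = 0 := by
      refine (mul_eq_zero.mp ?_).resolve_right
        (b.one_add_repr_self_ne_zero ⟨n - 2, by omega⟩ ⟨1, by omega⟩)
      linear_combination hx1
    have h2 : b.repr x ⟨2, hn⟩ = 0 := by
      refine (mul_eq_zero.mp ?_).resolve_right
        (b.one_add_repr_self_ne_zero ⟨n - 1, by omega⟩ ⟨2, hn⟩)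
      linear_combination hx2 - b.repr (b ⟨n - 2, by omega⟩) ⟨2, hn⟩ * h1
    simpa [shiftDerivation_apply, h1, h2] using hx
  exact ⟨hinj, LinearMap.injective_iff_surjective.mp hinj⟩

end Derivations

namespace IsAdaptedBasis

variable {b : Module.Basis (Fin n) K L}

theorem not_map_lie_of_add_repr_two_smul_last (hb : IsAdaptedBasis b) (hn : 2 < n)
    {Δ : L →ₗ[K] L} (hΔ : ∀ x : L, Δ x = x + b.repr x ⟨2, hn⟩ • b ⟨n - 1, by omega⟩) :
    ¬ ∀ x y : L, Δ ⁅x, y⁆ = ⁅Δ x, Δ y⁆ := by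
  intro hΔlie
  have h01 : ⁅b ⟨0, by omega⟩, b ⟨1, by omega⟩⁆ = b ⟨2, hn⟩ := hb.lie_basis_zero le_rfl rfl
  have h := hΔlie (b ⟨0, by omega⟩) (b ⟨1, by omega⟩)
  simp [hΔ, h01, b.ne_zero] at h

variable (hb : IsAdaptedBasis b) (hL : IsFiliform K L n)
include hb hL

theorem shiftDerivation_lie (hn : 2 < n) (x y : L) :
    shiftDerivation b hn ⁅x, y⁆ = ⁅shiftDerivation b hn x, y⁆ + ⁅x, shiftDerivation b hn y⁆ := by
  have hu0 : ⁅b ⟨n - 2, by omega⟩, b ⟨0, by omega⟩⁆ = -b ⟨n - 1, by omega⟩ := by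
    rw [← lie_skew, hb.lie_basis_zero (i := ⟨n - 2, by omega⟩) (j := ⟨n - 1, by omega⟩)
      (by simp; omega) (by simp; omega)]
  simp only [shiftDerivation_apply, hb.repr_lie_one hL hn, hb.repr_lie_two hL hn, zero_smul,
    zero_add, add_lie, lie_add, smul_lie, lie_smul, hb.basis_last_lie hL (by omega),
    hb.lie_basis_last hL (by omega), smul_zero, add_zero]
  rw [← lie_skew x, hb.basis_penultimate_lie hL hn x, hb.basis_penultimate_lie hL hn y, hu0]
  module

theorem shiftDerivation_lie_shiftDerivation (hn : 2 < n) (x y : L) :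
    ⁅shiftDerivation b hn x, shiftDerivation b hn y⁆ = 0 := by
  simp only [shiftDerivation_apply, lie_add, add_lie, lie_smul, smul_lie, lie_self,
    hb.lie_basis_last hL (by omega), hb.basis_last_lie hL (by omega), smul_zero, add_zero]

theorem centralDerivation_lie (hn : 2 < n) (c : K) (x y : L) :
    centralDerivation b hn c ⁅x, y⁆
      = ⁅centralDerivation b hn c x, y⁆ + ⁅x, centralDerivation b hn c y⁆ := by
  simp only [centralDerivation_apply, hb.repr_lie_one hL hn, mul_zero, zero_smul, smul_lie,
    lie_smul, hb.basis_last_lie hL (by omega), hb.lie_basis_last hL (by omega), smul_zero,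
    add_zero]

theorem centralDerivation_lie_centralDerivation (hn : 2 < n) (c : K) (x y : L) :
    ⁅centralDerivation b hn c x, centralDerivation b hn c y⁆ = 0 := by
  simp only [centralDerivation_apply, lie_smul, hb.lie_basis_last hL (by omega), smul_zero]

end IsAdaptedBasis

end LieAlgebra

open LieAlgebra in
theorem filiform_delta_localAut_not_aut (n : ℕ) (hn : 3 ≤ n)
    (L : Type*) [LieRing L] [LieAlgebra ℂ L]
    (b : Module.Basis (Fin n) ℂ L)
    (hfil : ∀ k : ℕ, 1 ≤ k → k ≤ n - 1 →
      Module.finrank ℂ (LieModule.lowerCentralSeries ℂ L L k) = n - k - 1)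
    (hbase : ∀ (i : Fin n) (h1 : 1 ≤ i.val) (h2 : i.val ≤ n - 2),
      ⁅b ⟨0, by omega⟩, b i⁆ = b ⟨i.val + 1, by omega⟩)
    (Δ : L →ₗ[ℂ] L)
    (hΔ : ∀ x : L, Δ x = x + (b.repr x ⟨2, by omega⟩) • b ⟨n - 1, by omega⟩) :
    (∀ x : L, ∃ Φ : L →ₗ[ℂ] L,
      (Function.Bijective Φ ∧ ∀ a c : L, Φ ⁅a, c⁆ = ⁅Φ a, Φ c⁆) ∧ Δ x = Φ x) ∧
    ¬ (Function.Bijective Δ ∧ ∀ x y : L, Δ ⁅x, y⁆ = ⁅Δ x, Δ y⁆) := by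
  have hb : IsAdaptedBasis b := hbase
  have hL : IsFiliform ℂ L n := hfil
  refine ⟨fun x => ?_, fun h => hb.not_map_lie_of_add_repr_two_smul_last hn hΔ h.2⟩
  by_cases hx : b.repr x ⟨1, by omega⟩ = 0
  · refine ⟨1 + shiftDerivation b hn, ⟨bijective_one_add_shiftDerivation b hn,
      map_lie_one_add_of_leibniz (hb.shiftDerivation_lie hL hn)
        (hb.shiftDerivation_lie_shiftDerivation hL hn)⟩, ?_⟩
    simp [hΔ, shiftDerivation_apply, hx]
  · let c := b.repr x ⟨2, hn⟩ / b.repr x ⟨1, by omega⟩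
    refine ⟨1 + centralDerivation b hn c, ⟨bijective_one_add_centralDerivation b hn c,
      map_lie_one_add_of_leibniz (hb.centralDerivation_lie hL hn c)
        (hb.centralDerivation_lie_centralDerivation hL hn c)⟩, ?_⟩
    simp [hΔ, centralDerivation_apply, c, div_mul_cancel₀ _ hx]
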